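/- For every planar graph G, fix(G) ≥ sqrt(free(G)). -/

import Mathlib

open Set

/-- A point in the plane. -/
abbrev Pt : Type := ℝ × ℝ

/-- The set of points occupied by a straight-line drawing `π` of `G`:
all vertex images together with all edge segments. -/
def drawSet {V : Type*} (G : SimpleGraph V) (π : V → Pt) : Set Pt :=
  Set.range π ∪ ⋃ (u : V) (v : V) (_ : G.Adj u v), segment ℝ (π u) (π v)

/-- `π` is a crossing-free straight-line drawing of `G`: it is injective, no vertex
lies on an edge segment other than at its endpoints, and two distinct edges meet
only in common endpoints. -/
def CrossFree {V : Type*} (G : SimpleGraph V) (π : V → Pt) : Prop :=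
  Function.Injective π ∧
  (∀ u v w : V, G.Adj u v → w ≠ u → w ≠ v → π w ∉ segment ℝ (π u) (π v)) ∧
  (∀ u v x y : V, G.Adj u v → G.Adj x y → s(u, v) ≠ s(x, y) →
    segment ℝ (π u) (π v) ∩ segment ℝ (π x) (π y) ⊆
      ({π u, π v} : Set Pt) ∩ ({π x, π y} : Set Pt))

/-- `G` is planar: it admits a crossing-free straight-line drawing. -/
def IsPlanarG {V : Type*} (G : SimpleGraph V) : Prop := ∃ π : V → Pt, CrossFree G π

/-- `G` is maximal planar (a triangulation): planar, and adding any edge destroys planarity. -/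
def MaxPlanar {V : Type*} (G : SimpleGraph V) : Prop :=
  IsPlanarG G ∧ ∀ u v : V, u ≠ v → ¬ G.Adj u v →
    ¬ IsPlanarG (G ⊔ SimpleGraph.fromEdgeSet {s(u, v)})

/-- The number of faces of a drawing: the number of connected components of the
complement of the drawing in the plane. -/
noncomputable def numFaces {V : Type*} (G : SimpleGraph V) (π : V → Pt) : ℕ :=
  Nat.card (ConnectedComponents ↥((drawSet G π)ᶜ))

/-- The set of points of a face (a connected component of the complement of the drawing). -/
def compSet {S : Set Pt} (c : ConnectedComponents ↥S) : Set Pt :=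
  {p | ∃ h : p ∈ S, ConnectedComponents.mk (⟨p, h⟩ : ↥S) = c}

/-- Number of vertices fixable when untangling a given drawing `π`. -/
noncomputable def fixDrawing {V : Type*} [Fintype V] (G : SimpleGraph V) (π : V → Pt) : ℕ :=
  sSup {m | ∃ π' : V → Pt, CrossFree G π' ∧ m = Nat.card {v : V | π' v = π v}}

/-- `fix G`: the minimum over all drawings of the number of fixable vertices. -/
noncomputable def fixNum {V : Type*} [Fintype V] (G : SimpleGraph V) : ℕ :=
  sInf {m | ∃ π : V → Pt, Function.Injective π ∧ m = fixDrawing G π}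

/-- `S` is a free collinear set in the crossing-free drawing `π`: its vertices lie on a
line, and any order-preserving displacement of them along the line extends to a
crossing-free redrawing of `G`. -/
def IsFreeSet {V : Type*} (G : SimpleGraph V) (π : V → Pt) (S : Set V) : Prop :=
  CrossFree G π ∧ ∃ (a d : Pt) (t : V → ℝ), d ≠ 0 ∧ (∀ v ∈ S, π v = a + t v • d) ∧
    ∀ t' : V → ℝ, (∀ u ∈ S, ∀ v ∈ S, t u < t v → t' u < t' v) →
      ∃ π' : V → Pt, CrossFree G π' ∧ ∀ v ∈ S, π' v = a + t' v • d

/-- `free G`: the largest size of a free collinear set over all crossing-free drawings. -/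
noncomputable def freeNum {V : Type*} (G : SimpleGraph V) : ℕ :=
  sSup {m | ∃ (π : V → Pt) (S : Set V), IsFreeSet G π S ∧ m = S.ncard}

/-- `lin G`: the largest number of collinear vertices over all crossing-free drawings. -/
noncomputable def linNum {V : Type*} (G : SimpleGraph V) : ℕ :=
  sSup {m | ∃ (π : V → Pt) (S : Set V), CrossFree G π ∧ Collinear ℝ (π '' S) ∧ m = S.ncard}

/-- The circumference of a graph: the length of a longest cycle. -/
noncomputable def circumference {V : Type*} (G : SimpleGraph V) : ℕ :=
  sSup {n | ∃ (v : V) (w : G.Walk v v), w.IsCycle ∧ w.length = n}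

/-- An almost layered crossing-free drawing: there are parallel lines (layers) such
that every vertex lies on a layer and every edge lies on one layer or joins two
consecutive layers. -/
def AlmostLayeredDrawing {V : Type*} (G : SimpleGraph V) (π : V → Pt) : Prop :=
  CrossFree G π ∧ ∃ (w : Pt) (c : ℕ → ℝ) (lay : V → ℕ), w ≠ 0 ∧ StrictMono c ∧
    (∀ v : V, (π v).1 * w.1 + (π v).2 * w.2 = c (lay v)) ∧
    ∀ u v : V, G.Adj u v → lay u = lay v ∨ lay u + 1 = lay v ∨ lay v + 1 = lay u

/-- An outerplanar drawing: crossing-free and all vertices lie on the outer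
(unbounded) face. -/
def OuterplanarDrawing {V : Type*} (G : SimpleGraph V) (π : V → Pt) : Prop :=
  CrossFree G π ∧ ∀ v : V, π v ∈ closure {p : Pt | p ∉ drawSet G π ∧
    ¬ Bornology.IsBounded (connectedComponentIn (drawSet G π)ᶜ p)}

/-- An outerplanar graph. -/
def Outerplanar {V : Type*} (G : SimpleGraph V) : Prop := ∃ π : V → Pt, OuterplanarDrawing G π

/-- The line through `a` with direction `d`. -/
def lineThrough (a d : Pt) : Set Pt := {p : Pt | ∃ t : ℝ, p = a + t • d}

/-- The faces of the drawing cut by the line through `a` with direction `d`. -/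
def cutFaces {V : Type*} (G : SimpleGraph V) (π : V → Pt) (a d : Pt) :
    Set (ConnectedComponents ↥((drawSet G π)ᶜ)) :=
  {c | ∃ p ∈ lineThrough a d, ∃ h : p ∈ (drawSet G π)ᶜ,
    ConnectedComponents.mk (⟨p, h⟩ : ↥((drawSet G π)ᶜ)) = c}

/-- The dual graph of a drawing: vertices are the faces, two faces being adjacent
iff they share an edge of the drawing. -/
def dualGraph {V : Type*} (G : SimpleGraph V) (π : V → Pt) :
    SimpleGraph (ConnectedComponents ↥((drawSet G π)ᶜ)) :=
  SimpleGraph.fromRel (fun c₁ c₂ => ∃ u v : V, G.Adj u v ∧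
    openSegment ℝ (π u) (π v) ⊆ closure (compSet c₁) ∩ closure (compSet c₂))

/-!
Take a drawing `π` realising `fix G` and any free collinear set `S`. A generic projection
`v ↦ (π v).1 + c * (π v).2` is injective, so by Erdős–Szekeres some `B ⊆ S` with `|B|² ≥ |S|`
is ordered along the free line monotonically (or antitonically) in this projection. Freeness
lets us slide `B` along the line to the projected positions. Pushing the vertices of `B` slightly
off the line, proportionally to `(π v).2`, keeps the drawing crossing-free and turns `B` into an
affine image of `π|B`; undoing that affine map gives a crossing-free drawing fixing `B`. Hence
`fix G ≥ |B| ≥ √|S|`.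
-/

open Filter Topology Finset OrderDual

def SameOrderOn {ι α β : Type*} [LinearOrder α] [LinearOrder β] (t : ι → α) (s : ι → β)
    (B : Set ι) : Prop :=
  ∀ u ∈ B, ∀ v ∈ B, t u < t v → s u < s v

namespace ErdosSzekeres

variable {ι α β : Type*} [LinearOrder α] [LinearOrder β] [DecidableEq ι]
  (t : ι → α) (s : ι → β) (A : Finset ι)

open Classical in
noncomputable def chainsEndingAt (v : ι) : Finset (Finset ι) :=
  A.powerset.filter fun C : Finset ι => v ∈ C ∧ (∀ w ∈ C, w ≠ v → t w < t v) ∧ SameOrderOn t s C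

noncomputable def chainLength (v : ι) : ℕ := (chainsEndingAt t s A v).sup card

variable {t s A}

theorem mem_chainsEndingAt {v : ι} {C : Finset ι} : C ∈ chainsEndingAt t s A v ↔
    C ⊆ A ∧ v ∈ C ∧ (∀ w ∈ C, w ≠ v → t w < t v) ∧ SameOrderOn t s C := by
  simp [chainsEndingAt]

theorem singleton_mem_chainsEndingAt {v : ι} (hv : v ∈ A) : {v} ∈ chainsEndingAt t s A v :=
  mem_chainsEndingAt.2 ⟨by simpa using hv, mem_singleton_self v, by simp, by
    intro u hu w hw; simp_all⟩

theorem exists_mem_chainsEndingAt_card_eq {v : ι} (hv : v ∈ A) :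
    ∃ C ∈ chainsEndingAt t s A v, #C = chainLength t s A v := by
  obtain ⟨C, hC, h⟩ :=
    exists_mem_eq_sup _ ⟨_, singleton_mem_chainsEndingAt (t := t) (s := s) hv⟩ card
  exact ⟨C, hC, h.symm⟩

theorem one_le_chainLength {v : ι} (hv : v ∈ A) : 1 ≤ chainLength t s A v :=
  le_sup (f := card) (singleton_mem_chainsEndingAt hv)

theorem chainLength_lt_chainLength {u v : ι} (hu : u ∈ A) (hv : v ∈ A) (ht : t u < t v)
    (hs : s u < s v) : chainLength t s A u < chainLength t s A v := by
  obtain ⟨C, hC, hCu⟩ := exists_mem_chainsEndingAt_card_eq (t := t) (s := s) hu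
  obtain ⟨hCA, huC, htop, hCs⟩ := mem_chainsEndingAt.1 hC
  have hlt : ∀ w ∈ C, t w < t v := fun w hw =>
    (eq_or_ne w u).elim (fun h => h ▸ ht) fun h => (htop w hw h).trans ht
  have hvC : v ∉ C := fun h => (hlt v h).false
  have hext : insert v C ∈ chainsEndingAt t s A v := by
    refine mem_chainsEndingAt.2 ⟨insert_subset hv hCA, mem_insert_self v C, ?_, ?_⟩
    · intro w hw hwv
      exact hlt w ((mem_insert.1 hw).resolve_left hwv)
    · intro x hx y hy hxy
      simp only [coe_insert, Set.mem_insert_iff, mem_coe] at hx hy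
      rcases hx with rfl | hx <;> rcases hy with rfl | hy
      · exact absurd hxy (lt_irrefl _)
      · exact absurd (hlt y hy) (not_lt.2 hxy.le)
      · rcases eq_or_ne x u with rfl | hxu
        · exact hs
        · exact (hCs x hx u huC (htop x hx hxu)).trans hs
      · exact hCs x hx y hy hxy
  calc chainLength t s A u = #C := hCu.symm
    _ < #(insert v C) := by rw [card_insert_of_notMem hvC]; omega
    _ ≤ chainLength t s A v := le_sup (f := card) hext

theorem sameOrderOn_toDual_fiber (hs : Set.InjOn s A) (k : ℕ) :
    SameOrderOn t (toDual ∘ s) ↑(A.filter fun v => chainLength t s A v = k) := by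
  intro u hu v hv huv
  simp only [mem_coe, mem_filter] at hu hv
  have hne : s u ≠ s v := fun h => huv.ne (congrArg t (hs hu.1 hv.1 h))
  refine toDual_lt_toDual.2 ((lt_or_gt_of_ne hne).resolve_left fun hlt => ?_)
  exact (chainLength_lt_chainLength hu.1 hv.1 huv hlt).ne (hu.2.trans hv.2.symm)

end ErdosSzekeres

open ErdosSzekeres in
theorem erdos_szekeres {ι α β : Type*} [LinearOrder α] [LinearOrder β] [DecidableEq ι]
    (t : ι → α) (s : ι → β) (A : Finset ι) (hs : Set.InjOn s A) :
    ∃ B ⊆ A, #A ≤ #B * #B ∧ (SameOrderOn t s B ∨ SameOrderOn t (toDual ∘ s) B) := by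
  rcases A.eq_empty_or_nonempty with rfl | hA
  · exact ⟨∅, subset_refl _, by simp, Or.inl fun u hu => by simp at hu⟩
  -- `L` takes at most `#C` values, `C` a longest chain, and its fibers are decreasing, so the
  -- largest fiber `F` has `#A ≤ #F * #C`.
  set L := chainLength t s A
  obtain ⟨v₀, hv₀, hLv₀⟩ := exists_mem_eq_sup A hA L
  obtain ⟨C, hC, hCcard⟩ := exists_mem_chainsEndingAt_card_eq (t := t) (s := s) hv₀
  obtain ⟨hCA, -, -, hCs⟩ := mem_chainsEndingAt.1 hC
  obtain ⟨w₀, -, hmax⟩ := A.exists_max_image (fun w => #(A.filter fun v => L v = L w)) hA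
  set F := A.filter fun v => L v = L w₀
  have hlabels : #(A.image L) ≤ #C := by
    calc #(A.image L) ≤ #(Icc 1 (A.sup L)) := card_le_card fun k hk => by
          obtain ⟨w, hw, rfl⟩ := mem_image.1 hk
          exact mem_Icc.2 ⟨one_le_chainLength hw, le_sup (f := L) hw⟩
      _ = #C := by simp [hLv₀, hCcard, L]
  have hcard : #A ≤ #F * #C := by
    calc #A ≤ #F * #(A.image L) := card_le_mul_card_image A _ fun k hk => by
          obtain ⟨w, hw, rfl⟩ := mem_image.1 hk
          exact hmax w hw
      _ ≤ #F * #C := Nat.mul_le_mul_left _ hlabels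
  rcases le_total #F #C with h | h
  · exact ⟨C, hCA, hcard.trans (Nat.mul_le_mul_right _ h), Or.inl hCs⟩
  · exact ⟨F, filter_subset _ _, hcard.trans (Nat.mul_le_mul_left _ h),
      Or.inr (sameOrderOn_toDual_fiber hs _)⟩

theorem StrictMonoOn.exists_strictMono_eqOn {f : ℝ → ℝ} {s : Set ℝ} (hs : s.Finite)
    (hf : StrictMonoOn f s) : ∃ g : ℝ → ℝ, StrictMono g ∧ EqOn f g s := by
  -- For `ε` below every slope of `f` on `s`, `f - ε • id` is monotone on `s`: extend it and add
  -- `ε • id` back.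
  have hslopes : ∀ᶠ ε in 𝓝 (0 : ℝ), ∀ x ∈ s, ∀ y ∈ s, x < y → ε * (y - x) < f y - f x := by
    simp only [hs.eventually_all, eventually_imp_distrib_left]
    intro x hx y hy hxy
    refine Tendsto.eventually_lt_const (sub_pos.2 (hf hx hy hxy)) ?_
    simpa using (continuous_mul_const (y - x)).tendsto 0
  obtain ⟨ε, hslope, hε⟩ := ((hslopes.filter_mono nhdsWithin_le_nhds).and
    (self_mem_nhdsWithin (s := Ioi 0))).exists
  have hmono : MonotoneOn (fun x => f x - ε * x) s := by
    intro x hx y hy hxy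
    rcases hxy.eq_or_lt with rfl | hlt
    · exact le_rfl
    · have := hslope x hx y hy hlt
      dsimp only
      linarith
  obtain ⟨g, hg, hfg⟩ := hmono.exists_monotone_extension (hs.image _).bddBelow
    (hs.image _).bddAbove
  refine ⟨fun x => g x + ε * x, hg.add_strictMono (strictMono_mul_left_of_pos hε), ?_⟩
  intro x hx
  simp [← hfg hx]

theorem SameOrderOn.exists_strictMono {ι : Type*} {t s : ι → ℝ} {B : Set ι} (h : SameOrderOn t s B)
    (hB : B.Finite) (ht : InjOn t B) : ∃ g : ℝ → ℝ, StrictMono g ∧ ∀ v ∈ B, g (t v) = s v := by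
  cases isEmpty_or_nonempty ι
  · exact ⟨id, strictMono_id, fun v => isEmptyElim v⟩
  have hinv : ∀ v ∈ B, Function.invFunOn t B (t v) = v := fun v hv => ht.leftInvOn_invFunOn hv
  have hf : StrictMonoOn (s ∘ Function.invFunOn t B) (t '' B) := by
    rintro _ ⟨u, hu, rfl⟩ _ ⟨v, hv, rfl⟩ huv
    simpa only [Function.comp_apply, hinv u hu, hinv v hv] using h u hu v hv huv
  obtain ⟨g, hg, hfg⟩ := hf.exists_strictMono_eqOn (hB.image t)
  exact ⟨g, hg, fun v hv => by simpa [hinv v hv] using (hfg (mem_image_of_mem t hv)).symm⟩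

theorem segment_inter_segment_subset_singleton {𝕜 E : Type*} [Field 𝕜] [LinearOrder 𝕜]
    [IsStrictOrderedRing 𝕜] [AddCommGroup E] [Module 𝕜 E] {p q r : E}
    (hq : q ∉ segment 𝕜 p r) (hr : r ∉ segment 𝕜 p q) :
    segment 𝕜 p q ∩ segment 𝕜 p r ⊆ {p} := by
  rintro z ⟨hzq, hzr⟩
  by_contra hzp
  rw [mem_segment_iff_wbtw] at hzq hzr
  obtain ⟨a, ha, rfl⟩ := hzq.right_mem_image_Ici_of_left_ne (Ne.symm hzp)
  obtain ⟨b, hb, rfl⟩ := hzr.right_mem_image_Ici_of_left_ne (Ne.symm hzp)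
  simp only [AffineMap.lineMap_apply] at hq hr
  rcases wbtw_or_wbtw_smul_vadd_of_nonneg p (z -ᵥ p) (zero_le_one.trans ha)
    (zero_le_one.trans hb) with h | h
  · exact hq h.mem_segment
  · exact hr h.mem_segment

theorem isOpen_setOf_disjoint_segment {E : Type*} [AddCommGroup E] [TopologicalSpace E]
    [IsTopologicalAddGroup E] [Module ℝ E] [ContinuousSMul ℝ E] [T2Space E] :
    IsOpen {x : (E × E) × (E × E) | Disjoint (segment ℝ x.1.1 x.1.2) (segment ℝ x.2.1 x.2.2)} := by
  -- Meeting pairs of segments are the projection of a closed set along the compact square of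
  -- parameters.
  have hmeet :
      {x : (E × E) × (E × E) | Disjoint (segment ℝ x.1.1 x.1.2) (segment ℝ x.2.1 x.2.2)}ᶜ =
        Prod.fst '' {y : ((E × E) × (E × E)) × (unitInterval × unitInterval) |
          y.1.1.1 + (y.2.1 : ℝ) • (y.1.1.2 - y.1.1.1) =
            y.1.2.1 + (y.2.2 : ℝ) • (y.1.2.2 - y.1.2.1)} := by
    ext x
    simp only [Set.mem_compl_iff, Set.mem_ofPred_eq, Set.not_disjoint_iff, segment_eq_image',
      Set.mem_image, Prod.exists, Subtype.exists, unitInterval, exists_and_right, exists_eq_right]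
    constructor
    · rintro ⟨_, ⟨θ, hθ, rfl⟩, σ, hσ, h⟩
      exact ⟨θ, hθ, σ, hσ, h.symm⟩
    · rintro ⟨θ, hθ, σ, hσ, h⟩
      exact ⟨_, ⟨θ, hθ, rfl⟩, σ, hσ, h.symm⟩
  rw [← isClosed_compl_iff, hmeet]
  exact isClosedMap_fst_of_compactSpace _ (isClosed_eq (by fun_prop) (by fun_prop))

theorem exists_injective_fst_add_mul_snd {V : Type*} [Finite V] {π : V → ℝ × ℝ}
    (hπ : Function.Injective π) : ∃ c : ℝ, Function.Injective fun v => (π v).1 + c * (π v).2 := by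
  have hbad : (⋃ p : {p : V × V // p.1 ≠ p.2},
      {c : ℝ | (π p.1.1).1 + c * (π p.1.1).2 = (π p.1.2).1 + c * (π p.1.2).2}).Finite := by
    refine Set.finite_iUnion fun ⟨(u, v), huv⟩ => Set.Subsingleton.finite ?_
    intro c₁ h₁ c₂ h₂
    simp only [Set.mem_ofPred_eq] at h₁ h₂
    by_contra hc
    have h₂' : (π u).2 = (π v).2 := by
      have : (c₁ - c₂) * ((π u).2 - (π v).2) = 0 := by linear_combination h₁ - h₂
      linarith [(mul_eq_zero.1 this).resolve_left (sub_ne_zero.2 hc)]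
    exact huv (hπ (Prod.ext (by linear_combination h₁ - c₁ * h₂') h₂'))
  obtain ⟨c, hc⟩ := hbad.infinite_compl.nonempty
  exact ⟨c, fun u v huv => by_contra fun hne => hc (Set.mem_iUnion.2 ⟨⟨(u, v), hne⟩, huv⟩)⟩

section Drawing

variable {V : Type*} {G : SimpleGraph V}

theorem crossFree_iff {π : V → Pt} : CrossFree G π ↔ Function.Injective π ∧
    (∀ u v w : V, G.Adj u v → w ≠ u → w ≠ v → π w ∉ segment ℝ (π u) (π v)) ∧
    (∀ u v x y : V, G.Adj u v → G.Adj x y → u ≠ x → u ≠ y → v ≠ x → v ≠ y →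
      Disjoint (segment ℝ (π u) (π v)) (segment ℝ (π x) (π y))) := by
  refine ⟨fun ⟨hinj, hvert, hcross⟩ => ⟨hinj, hvert, ?_⟩,
    fun ⟨hinj, hvert, hdisj⟩ => ⟨hinj, hvert, ?_⟩⟩
  · intro u v x y huv hxy hux huy hvx hvy
    refine Set.disjoint_left.2 fun z hz₁ hz₂ => ?_
    have hne : s(u, v) ≠ s(x, y) := by simp [hux, huy]
    obtain ⟨hz₁, hz₂⟩ := hcross u v x y huv hxy hne ⟨hz₁, hz₂⟩
    simp only [Set.mem_insert_iff, Set.mem_singleton_iff] at hz₁ hz₂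
    rcases hz₁ with rfl | rfl <;> rcases hz₂ with h | h <;> exact absurd (hinj h) ‹_›
  -- Edges sharing an endpoint could only overlap elsewhere if one contained the other's far end.
  · have shared : ∀ u v y, G.Adj u v → G.Adj u y → v ≠ y →
        segment ℝ (π u) (π v) ∩ segment ℝ (π u) (π y) ⊆ {π u} := fun u v y huv huy hvy =>
      segment_inter_segment_subset_singleton (hvert u y v huy huv.ne.symm hvy)
        (hvert u v y huv huy.ne.symm hvy.symm)
    intro u v x y huv hxy hne z ⟨hz₁, hz₂⟩
    rcases eq_or_ne u x with rfl | hux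
    · have hvy : v ≠ y := by rintro rfl; exact hne rfl
      obtain rfl := shared u v y huv hxy hvy ⟨hz₁, hz₂⟩
      simp
    rcases eq_or_ne u y with rfl | huy
    · have hvx : v ≠ x := by rintro rfl; exact hne Sym2.eq_swap
      rw [segment_symm] at hz₂
      obtain rfl := shared u v x huv hxy.symm hvx ⟨hz₁, hz₂⟩
      simp
    rcases eq_or_ne v x with rfl | hvx
    · rw [segment_symm] at hz₁
      obtain rfl := shared v u y huv.symm hxy huy ⟨hz₁, hz₂⟩
      simp
    rcases eq_or_ne v y with rfl | hvy
    · rw [segment_symm] at hz₁ hz₂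
      obtain rfl := shared v u x huv.symm hxy.symm hux ⟨hz₁, hz₂⟩
      simp
    · exact absurd hz₂ (Set.disjoint_left.1 (hdisj u v x y huv hxy hux huy hvx hvy) hz₁)

theorem CrossFree.comp_affineMap {π : V → Pt} (h : CrossFree G π) (f : Pt →ᵃ[ℝ] Pt)
    (hf : Function.Injective f) : CrossFree G (f ∘ π) := by
  obtain ⟨hinj, hvert, hdisj⟩ := crossFree_iff.1 h
  refine crossFree_iff.2 ⟨hf.comp hinj, fun u v w huv hwu hwv => ?_,
    fun u v x y huv hxy hux huy hvx hvy => ?_⟩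
  · simpa [← image_segment, hf.mem_set_image] using hvert u v w huv hwu hwv
  · simpa [← image_segment, Set.disjoint_image_iff hf] using
      hdisj u v x y huv hxy hux huy hvx hvy

theorem CrossFree.eventually_add_smul [Finite V] {δ : V → Pt} (h : CrossFree G δ) (w : V → Pt) :
    ∀ᶠ ε in 𝓝 (0 : ℝ), CrossFree G fun v => δ v + ε • w v := by
  obtain ⟨hinj, hvert, hdisj⟩ := crossFree_iff.1 h
  have hstable : ∀ u v x y, Disjoint (segment ℝ (δ u) (δ v)) (segment ℝ (δ x) (δ y)) →
      ∀ᶠ ε in 𝓝 (0 : ℝ), Disjoint (segment ℝ (δ u + ε • w u) (δ v + ε • w v))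
        (segment ℝ (δ x + ε • w x) (δ y + ε • w y)) := by
    intro u v x y hd
    have hcont : Continuous fun ε : ℝ =>
        ((δ u + ε • w u, δ v + ε • w v), (δ x + ε • w x, δ y + ε • w y)) := by fun_prop
    exact (hcont.tendsto' 0 ((δ u, δ v), (δ x, δ y)) (by simp)).eventually
      (isOpen_setOf_disjoint_segment.eventually_mem hd)
  have hinj' : ∀ᶠ ε in 𝓝 (0 : ℝ), ∀ u v, u ≠ v → δ u + ε • w u ≠ δ v + ε • w v := by
    simp only [eventually_all]
    intro u v huv
    simpa [segment_same] using hstable u u v v (by simpa [segment_same] using hinj.ne huv)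
  have hvert' : ∀ᶠ ε in 𝓝 (0 : ℝ), ∀ u v x, G.Adj u v → x ≠ u → x ≠ v →
      δ x + ε • w x ∉ segment ℝ (δ u + ε • w u) (δ v + ε • w v) := by
    simp only [eventually_all]
    intro u v x huv hxu hxv
    simpa [segment_same] using
      hstable u v x x (by simpa [segment_same] using hvert u v x huv hxu hxv)
  have hdisj' : ∀ᶠ ε in 𝓝 (0 : ℝ), ∀ u v x y, G.Adj u v → G.Adj x y → u ≠ x → u ≠ y →
      v ≠ x → v ≠ y → Disjoint (segment ℝ (δ u + ε • w u) (δ v + ε • w v))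
        (segment ℝ (δ x + ε • w x) (δ y + ε • w y)) := by
    simp only [eventually_all]
    intro u v x y huv hxy hux huy hvx hvy
    exact hstable u v x y (hdisj u v x y huv hxy hux huy hvx hvy)
  filter_upwards [hinj', hvert', hdisj'] with ε h₁ h₂ h₃
  exact crossFree_iff.2 ⟨fun u v huv => by_contra fun hne => h₁ u v hne huv, h₂, h₃⟩

theorem CrossFree.exists_eqOn_of_mem_line [Finite V] {δ : V → Pt} (h : CrossFree G δ) {a d : Pt}
    (hd : d ≠ 0) (c : ℝ) {q : V → Pt} {B : Set V}
    (hB : ∀ v ∈ B, δ v = a + ((q v).1 + c * (q v).2) • d) :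
    ∃ π' : V → Pt, CrossFree G π' ∧ ∀ v ∈ B, π' v = q v := by
  -- Pushing `v ∈ B` off the line by `ε * (q v).2` along the normal `n` puts it at `a + A (q v)`
  -- for an injective linear `A`, which the affine map `p ↦ A⁻¹ (p - a)` then undoes.
  set n : Pt := (-d.2, d.1)
  obtain ⟨ε, hCF, hε⟩ := (((h.eventually_add_smul fun v => (q v).2 • n).filter_mono
    nhdsWithin_le_nhds).and (self_mem_nhdsWithin (s := {0}ᶜ))).exists
  let A : Pt →ₗ[ℝ] Pt := (LinearMap.fst ℝ ℝ ℝ + c • LinearMap.snd ℝ ℝ ℝ).smulRight d +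
    (ε • LinearMap.snd ℝ ℝ ℝ).smulRight n
  have hA : ∀ p, A p = (p.1 + c * p.2) • d + (ε * p.2) • n := fun p => rfl
  have hAinj : Function.Injective A := by
    rw [← LinearMap.ker_eq_bot, LinearMap.ker_eq_bot']
    intro p hp
    have h₁ := congrArg Prod.fst ((hA p).symm.trans hp)
    have h₂ := congrArg Prod.snd ((hA p).symm.trans hp)
    simp only [Prod.fst_add, Prod.snd_add, Prod.smul_fst, Prod.smul_snd, smul_eq_mul, n,
      Prod.fst_zero, Prod.snd_zero] at h₁ h₂
    have hd' : d.1 ^ 2 + d.2 ^ 2 ≠ 0 := by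
      contrapose! hd
      ext <;> simp <;> nlinarith [sq_nonneg d.1, sq_nonneg d.2]
    have hx : p.1 + c * p.2 = 0 := by
      refine (mul_eq_zero.1 ?_).resolve_right hd'
      linear_combination d.1 * h₁ + d.2 * h₂
    have hy : ε * p.2 = 0 := by
      refine (mul_eq_zero.1 ?_).resolve_right hd'
      linear_combination d.1 * h₂ - d.2 * h₁
    have hp₂ : p.2 = 0 := (mul_eq_zero.1 hy).resolve_left hε
    ext
    · simpa [hp₂] using hx
    · exact hp₂
  set e := LinearEquiv.ofInjectiveEndo A hAinj
  let f : Pt →ᵃ[ℝ] Pt := ⟨fun p => e.symm (p - a), e.symm.toLinearMap, fun p v => by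
    simp [add_sub_assoc]⟩
  refine ⟨f ∘ fun v => δ v + ε • (q v).2 • n,
    hCF.comp_affineMap f fun p p' hpp' => by simpa [f] using hpp', fun v hv => ?_⟩
  show e.symm (δ v + ε • (q v).2 • n - a) = q v
  rw [e.symm_apply_eq, LinearEquiv.coe_ofInjectiveEndo, hA, hB v hv, smul_smul]
  abel

theorem IsFreeSet.exists_crossFree_mem_line {π : V → Pt} {S : Set V} (hS : IsFreeSet G π S)
    (hSfin : S.Finite) {f : V → ℝ} (hf : Set.InjOn f S) :
    ∃ B : Finset V, ↑B ⊆ S ∧ S.ncard ≤ #B * #B ∧ ∃ (δ : V → Pt) (a d : Pt),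
      CrossFree G δ ∧ d ≠ 0 ∧ ∀ v ∈ B, δ v = a + f v • d := by
  classical
  obtain ⟨hCF, a, d, t, hd, hline, hmove⟩ := hS
  have ht : Set.InjOn t S := fun u hu v hv huv => hCF.1 (by rw [hline u hu, hline v hv, huv])
  obtain ⟨B, hBS, hcard, hord⟩ := erdos_szekeres t f hSfin.toFinset (by simpa using hf)
  have hBS' : (B : Set V) ⊆ S := by simpa using hBS
  obtain ⟨σ, hσ, hσord⟩ : ∃ σ : ℝ, σ ≠ 0 ∧ SameOrderOn t (fun v => σ * f v) B := by
    rcases hord with h | h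
    · exact ⟨1, one_ne_zero, by simpa using h⟩
    · exact ⟨-1, by norm_num, fun u hu v hv huv => by simpa using h u hu v hv huv⟩
  obtain ⟨g, hg, hgB⟩ := hσord.exists_strictMono B.finite_toSet (ht.mono hBS')
  obtain ⟨δ, hδ, hδS⟩ := hmove (g ∘ t) fun u _ v _ huv => hg huv
  refine ⟨B, hBS', by simpa [Set.ncard_eq_toFinset_card S hSfin] using hcard, δ, a, σ • d, hδ,
    smul_ne_zero hσ hd, fun v hv => ?_⟩
  rw [hδS v (hBS' hv), Function.comp_apply, hgB v hv, smul_smul, mul_comm]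

variable [Fintype V]

theorem card_le_fixDrawing {π π' : V → Pt} (hπ' : CrossFree G π') {B : Finset V}
    (hB : ∀ v ∈ B, π' v = π v) : #B ≤ fixDrawing G π := by
  have hbdd : BddAbove {m | ∃ π'' : V → Pt, CrossFree G π'' ∧ m = Nat.card {v | π'' v = π v}} :=
    ⟨Nat.card V, by rintro _ ⟨π'', -, rfl⟩; exact Finite.card_subtype_le _⟩
  calc #B = Nat.card (B : Set V) := (Nat.card_eq_finsetCard B).symm
    _ ≤ Nat.card {v | π' v = π v} := Nat.card_mono (Set.toFinite _) hB
    _ ≤ fixDrawing G π := le_csSup hbdd ⟨π', hπ', rfl⟩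

theorem IsFreeSet.ncard_le_fixDrawing_sq {π₀ π : V → Pt} {S : Set V} (hS : IsFreeSet G π₀ S)
    (hπ : Function.Injective π) : S.ncard ≤ fixDrawing G π ^ 2 := by
  obtain ⟨c, hc⟩ := exists_injective_fst_add_mul_snd hπ
  obtain ⟨B, -, hcard, δ, a, d, hδ, hd, hδB⟩ := hS.exists_crossFree_mem_line S.toFinite hc.injOn
  obtain ⟨π', hπ', hπ'B⟩ := hδ.exists_eqOn_of_mem_line hd c hδB
  have hB := card_le_fixDrawing hπ' hπ'B
  calc S.ncard ≤ #B * #B := hcard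
    _ ≤ fixDrawing G π ^ 2 := by rw [sq]; exact Nat.mul_le_mul hB hB

end Drawing

/-- For every planar graph `G`, `fix G ≥ √(free G)`. -/
theorem fix_ge_sqrt_free {V : Type*} [Fintype V] (G : SimpleGraph V) (hG : IsPlanarG G) :
    Real.sqrt (freeNum G) ≤ (fixNum G : ℝ) := by
  obtain ⟨π₀, hπ₀⟩ := hG
  obtain ⟨π, hπ, hfix⟩ : fixNum G ∈ {m | ∃ π : V → Pt, Function.Injective π ∧
      m = fixDrawing G π} := Nat.sInf_mem ⟨_, π₀, hπ₀.1, rfl⟩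
  have hfree : freeNum G ≤ fixDrawing G π ^ 2 :=
    csSup_le' fun _ ⟨_, _, hS, hm⟩ => hm ▸ hS.ncard_le_fixDrawing_sq hπ
  rw [hfix, Real.sqrt_le_iff]
  exact ⟨Nat.cast_nonneg _, by exact_mod_cast hfree⟩
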